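/- The proximal mapping of t·g_σ, where g_σ(v) = (1/(2σ))(|v| − b)², at a nonzero point z ∈ ℂ is given by (b·e^{i·arg(z)} + (σ/t)·z)/(1 + σ/t); i.e., the unique minimizer of v ↦ (1/(2σ))(|v| − b)² + (1/(2t))|v − z|² is this linear interpolation between z and its projection onto the circle of radius b. -/

import Mathlib

/-!
Writing `r = ‖v‖` and `R = ‖z‖`, the identity `‖v - z‖² = (r - R)² + 2 (r R - ⟪v, z⟫)` splits the
objective into the radial quadratic `(r - b)²/(2σ) + (r - R)²/(2t)` and the Cauchy–Schwarz gap
`(r R - ⟪v, z⟫)/t ≥ 0`. The radial part is minimized exactly at `r = ρ := (b t + σ R)/(t + σ) ≥ 0`,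
and the gap vanishes exactly on the ray through `z`; the only point meeting both conditions is
`(ρ/R) z`, which is the stated `(b z/R + (σ/t) z)/(1 + σ/t)`. Nothing here is specific to `ℂ`: the
argument works in any real inner product space.
-/

open RealInnerProductSpace

section InnerProductSpace

variable {E : Type*} [NormedAddCommGroup E] [InnerProductSpace ℝ E]

theorem norm_sub_sq_eq_sq_sub_norm_add (x y : E) :
    ‖x - y‖ ^ 2 = (‖x‖ - ‖y‖) ^ 2 + 2 * (‖x‖ * ‖y‖ - ⟪x, y⟫) := by
  rw [norm_sub_sq_real]
  ring

noncomputable def proxObjective (b σ t : ℝ) (z v : E) : ℝ :=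
  1 / (2 * σ) * (‖v‖ - b) ^ 2 + 1 / (2 * t) * ‖v - z‖ ^ 2

/-- The norm of the minimizer of `proxObjective`. -/
noncomputable def proxRadius (b σ t R : ℝ) : ℝ :=
  (b * t + σ * R) / (t + σ)

noncomputable def proxPoint (b σ t : ℝ) (z : E) : E :=
  (proxRadius b σ t ‖z‖ / ‖z‖) • z

theorem radial_quadratic_eq {b σ t : ℝ} (hσ : 0 < σ) (ht : 0 < t) (R r : ℝ) :
    1 / (2 * σ) * (r - b) ^ 2 + 1 / (2 * t) * (r - R) ^ 2 =
      1 / (2 * σ) * (proxRadius b σ t R - b) ^ 2 + 1 / (2 * t) * (proxRadius b σ t R - R) ^ 2 +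
        (1 / (2 * σ) + 1 / (2 * t)) * (r - proxRadius b σ t R) ^ 2 := by
  have hts : t + σ ≠ 0 := by positivity
  unfold proxRadius
  field_simp
  ring

theorem proxObjective_eq_radial_add_gap (b σ t : ℝ) (z v : E) :
    proxObjective b σ t z v =
      1 / (2 * σ) * (‖v‖ - b) ^ 2 + 1 / (2 * t) * (‖v‖ - ‖z‖) ^ 2 +
        1 / t * (‖v‖ * ‖z‖ - ⟪v, z⟫) := by
  rw [proxObjective, norm_sub_sq_eq_sq_sub_norm_add]
  ring

variable {b σ t : ℝ} {z : E}

theorem proxRadius_nonneg (hb : 0 ≤ b) (hσ : 0 < σ) (ht : 0 < t) (R : ℝ) (hR : 0 ≤ R) :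
    0 ≤ proxRadius b σ t R := by
  unfold proxRadius
  positivity

theorem norm_proxPoint (hb : 0 ≤ b) (hσ : 0 < σ) (ht : 0 < t) (hz : z ≠ 0) :
    ‖proxPoint b σ t z‖ = proxRadius b σ t ‖z‖ := by
  have hR : 0 < ‖z‖ := norm_pos_iff.mpr hz
  rw [proxPoint, norm_smul, Real.norm_of_nonneg
    (div_nonneg (proxRadius_nonneg hb hσ ht _ hR.le) hR.le), div_mul_cancel₀ _ hR.ne']

theorem inner_proxPoint_self (hb : 0 ≤ b) (hσ : 0 < σ) (ht : 0 < t) (hz : z ≠ 0) :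
    ⟪proxPoint b σ t z, z⟫ = ‖proxPoint b σ t z‖ * ‖z‖ := by
  rw [inner_eq_norm_mul_iff_real, norm_proxPoint hb hσ ht hz, proxPoint, smul_smul,
    mul_div_cancel₀ _ (norm_ne_zero_iff.mpr hz)]

theorem proxObjective_eq_proxObjective_proxPoint_add (hb : 0 ≤ b) (hσ : 0 < σ) (ht : 0 < t)
    (hz : z ≠ 0) (v : E) :
    proxObjective b σ t z v = proxObjective b σ t z (proxPoint b σ t z) +
      (1 / (2 * σ) + 1 / (2 * t)) * (‖v‖ - proxRadius b σ t ‖z‖) ^ 2 +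
        1 / t * (‖v‖ * ‖z‖ - ⟪v, z⟫) := by
  rw [proxObjective_eq_radial_add_gap, proxObjective_eq_radial_add_gap,
    inner_proxPoint_self hb hσ ht hz, norm_proxPoint hb hσ ht hz, radial_quadratic_eq hσ ht]
  ring

theorem eq_proxPoint_of_norm_eq_of_inner_eq (hz : z ≠ 0) {v : E}
    (hnorm : ‖v‖ = proxRadius b σ t ‖z‖) (hinner : ⟪v, z⟫ = ‖v‖ * ‖z‖) :
    v = proxPoint b σ t z := by
  have hR : ‖z‖ ≠ 0 := norm_ne_zero_iff.mpr hz
  rw [inner_eq_norm_mul_iff_real, hnorm] at hinner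
  rw [proxPoint, div_eq_inv_mul, mul_smul, ← hinner, smul_smul, inv_mul_cancel₀ hR, one_smul]

theorem proxObjective_proxPoint_lt (hb : 0 ≤ b) (hσ : 0 < σ) (ht : 0 < t) (hz : z ≠ 0)
    {v : E} (hv : v ≠ proxPoint b σ t z) :
    proxObjective b σ t z (proxPoint b σ t z) < proxObjective b σ t z v := by
  rw [proxObjective_eq_proxObjective_proxPoint_add hb hσ ht hz v, add_assoc, lt_add_iff_pos_right]
  have hgap : 0 ≤ ‖v‖ * ‖z‖ - ⟪v, z⟫ := sub_nonneg.mpr (real_inner_le_norm v z)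
  by_cases hnorm : ‖v‖ = proxRadius b σ t ‖z‖
  · have hgap_pos : 0 < ‖v‖ * ‖z‖ - ⟪v, z⟫ :=
      hgap.lt_of_ne fun h => hv (eq_proxPoint_of_norm_eq_of_inner_eq hz hnorm (by linarith))
    rw [← hnorm, sub_self, zero_pow two_ne_zero, mul_zero, zero_add]
    positivity
  · have := sub_ne_zero.mpr hnorm
    positivity

end InnerProductSpace

/-- The proximal mapping of `t·g_σ`, with `g_σ(v) = (1/(2σ))(|v| - b)²`, at a nonzero
point `z : ℂ` is `(b·e^{i·arg z} + (σ/t)·z)/(1 + σ/t)`: it is the unique minimizer of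
`v ↦ (1/(2σ))(|v| - b)² + (1/(2t))|v - z|²`. -/
theorem stmt_2 (b : ℝ) (hb : 0 ≤ b) (σ t : ℝ) (hσ : 0 < σ) (ht : 0 < t)
    (z : ℂ) (hz : z ≠ 0) :
    let F : ℂ → ℝ := fun v =>
      (1 / (2 * σ)) * (‖v‖ - b) ^ 2 + (1 / (2 * t)) * ‖v - z‖ ^ 2
    let w : ℂ := ((b : ℂ) * (z / (‖z‖ : ℝ)) + ((σ / t : ℝ) : ℂ) * z) /
      ((1 + σ / t : ℝ) : ℂ)
    (∀ v : ℂ, F w ≤ F v) ∧ ∀ v : ℂ, v ≠ w → F w < F v := by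
  intro F w
  have hR : (‖z‖ : ℂ) ≠ 0 := by exact_mod_cast norm_ne_zero_iff.mpr hz
  have hw : w = proxPoint b σ t z := by
    have : (t : ℂ) + σ ≠ 0 := by exact_mod_cast (add_pos ht hσ).ne'
    have : (t : ℂ) ≠ 0 := by exact_mod_cast ht.ne'
    simp only [w, proxPoint, proxRadius, Complex.real_smul]
    push_cast
    field_simp
  have hlt : ∀ v : ℂ, v ≠ w → F w < F v := fun v hv => by
    rw [hw] at hv ⊢
    exact proxObjective_proxPoint_lt hb hσ ht hz hv
  refine ⟨fun v => ?_, hlt⟩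
  rcases eq_or_ne v w with rfl | hv
  · exact le_rfl
  · exact (hlt v hv).le
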